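/- Let K be a convex body in ℝ^d and Λ a lattice such that K satisfies the discrete monotonicity property with respect to Λ: for every subgroup Λ̃ of Λ of rank i, the function r ↦ D_Λ(K, rΛ̃)/r^i is decreasing in positive integers r. Then G(K,Λ) ≤ ∏_{i=1}^d ⌊2/λ_i(K,Λ) + 1⌋. -/

import Mathlib

/-!
Let `C = ½(K - K)`, `λᵢ = λᵢ(K, Λ)` and `qᵢ = ⌊2/λᵢ + 1⌋`, the least integer with `2/qᵢ < λᵢ`.
Let `Mᵢ` be the sublattice of `Λ` lying in a subspace of dimension `≤ i` that contains every
lattice point of `tC` for `t < λᵢ₊₁`; then `M₀ = 0` and `M_d = Λ`. If `x, y ∈ K ∩ Λ` and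
`x - y = qᵢ₊₁ m` with `m ∈ Λ`, then `m ∈ (2/qᵢ₊₁) C`, so already `m ∈ Mᵢ`: reducing `K ∩ Λ`
modulo `qᵢ₊₁ Mᵢ₊₁` separates at least as many points as modulo `qᵢ₊₁ Mᵢ`. Discrete monotonicity,
applied with exponent `i ≥ rank Mᵢ`, lets the modulus drop from `qᵢ₊₁` to any smaller `r`, and
induction gives
`G(K, Λ) ≤ q₁ ⋯ qᵢ · D_Λ(K, r Mᵢ) / rⁱ` for all `1 ≤ r ≤ qᵢ`. At `i = d`, `r = 1` the residue
count `D_Λ(K, Λ)` is at most `1`.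
-/

open Pointwise Set

noncomputable def succMin {d : ℕ} (i : ℕ) (C : Set (Fin d → ℝ)) (Λ : Submodule ℤ (Fin d → ℝ)) : ℝ :=
  sInf {t : ℝ | 0 < t ∧ i ≤ Module.finrank ℝ (Submodule.span ℝ ((t • C) ∩ (Λ : Set (Fin d → ℝ))))}

noncomputable def lam {d : ℕ} (i : ℕ) (K : Set (Fin d → ℝ)) (Λ : Submodule ℤ (Fin d → ℝ)) : ℝ :=
  succMin i ((2:ℝ)⁻¹ • (K - K)) Λ

noncomputable def latCount {d : ℕ} (K : Set (Fin d → ℝ)) (Λ : Submodule ℤ (Fin d → ℝ)) : ℕ :=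
  (K ∩ (Λ : Set (Fin d → ℝ))).ncard

noncomputable def resCount {d : ℕ} (K : Set (Fin d → ℝ)) (Λ M : Submodule ℤ (Fin d → ℝ)) : ℕ :=
  (((QuotientAddGroup.mk (s := M.toAddSubgroup)) '' (K ∩ (Λ : Set (Fin d → ℝ))))).ncard

open Module Submodule Topology

theorem DirectedOn.exists_forall_le_of_wellFoundedGT {ι α : Type*} [PartialOrder α]
    [WellFoundedGT α] {f : ι → α} {s : Set ι} (hs : s.Nonempty)
    (hf : DirectedOn (fun i j ↦ f i ≤ f j) s) : ∃ i ∈ s, ∀ j ∈ s, f j ≤ f i := by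
  obtain ⟨_, ⟨i, hi, rfl⟩, hmax⟩ := wellFounded_gt.has_min (f '' s) (hs.image f)
  refine ⟨i, hi, fun j hj ↦ ?_⟩
  obtain ⟨k, hk, hik, hjk⟩ := hf i hi j hj
  exact hjk.trans (eq_of_le_of_not_lt hik (hmax _ ⟨k, hk, rfl⟩)).ge

theorem Set.ncard_image_le_ncard_image_of_eq_imp_eq {α β γ : Type*} {s : Set α} (hs : s.Finite)
    {f : α → β} {g : α → γ} (h : ∀ x ∈ s, ∀ y ∈ s, g x = g y → f x = f y) :
    (f '' s).ncard ≤ (g '' s).ncard := by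
  rcases s.eq_empty_or_nonempty with rfl | ⟨a, -⟩
  · simp
  have : Nonempty α := ⟨a⟩
  have hfactor : f '' s ⊆ (f ∘ Function.invFunOn g s) '' (g '' s) := by
    rintro _ ⟨x, hx, rfl⟩
    have hgx : ∃ y ∈ s, g y = g x := ⟨x, hx, rfl⟩
    exact ⟨g x, mem_image_of_mem g hx,
      h _ (Function.invFunOn_mem hgx) x hx (Function.invFunOn_eq hgx)⟩
  calc (f '' s).ncard ≤ ((f ∘ Function.invFunOn g s) '' (g '' s)).ncard :=
        ncard_le_ncard hfactor ((hs.image g).image _)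
    _ ≤ (g '' s).ncard := ncard_image_le (hs.image g)

theorem exists_pos_forall_norm_lt_eq_zero {E : Type*} [NormedAddCommGroup E]
    (Λ : Submodule ℤ E) [DiscreteTopology Λ] : ∃ ε > 0, ∀ v ∈ Λ, ‖v‖ < ε → v = 0 := by
  obtain ⟨ε, hε, hball⟩ := Metric.isOpen_iff.1 (isOpen_discrete {(0 : Λ)}) 0 rfl
  refine ⟨ε, hε, fun v hv hvε ↦ ?_⟩
  have : (⟨v, hv⟩ : Λ) ∈ Metric.ball 0 ε := by simpa using hvε
  simpa using hball this

theorem Bornology.IsBounded.finite_inter_submodule {E : Type*} [NormedAddCommGroup E]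
    [ProperSpace E] {K : Set E} (hK : IsBounded K) (Λ : Submodule ℤ E)
    [DiscreteTopology Λ] : (K ∩ (Λ : Set E)).Finite :=
  Metric.finite_isBounded_inter_isClosed (isDiscrete_iff_discreteTopology.2 ‹_›) hK
    (AddSubgroup.isClosed_of_discrete (H := Λ.toAddSubgroup))

theorem finrank_inf_restrictScalars_le {E : Type*} [NormedAddCommGroup E] [NormedSpace ℝ E]
    [FiniteDimensional ℝ E] {Λ : Submodule ℤ E} [DiscreteTopology Λ] (V : Submodule ℝ E) :
    finrank ℤ ↥(Λ ⊓ V.restrictScalars ℤ) ≤ finrank ℝ V := by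
  have : DiscreteTopology (span ℤ ((Λ ⊓ V.restrictScalars ℤ : Submodule ℤ E) : Set E)) := by
    rw [span_eq]
    exact DiscreteTopology.of_subset (s := (Λ : Set E)) ‹_› fun x hx ↦ hx.1
  have hrank := Real.finrank_eq_int_finrank_of_discrete this
  rw [Set.finrank, Set.finrank, span_eq] at hrank
  rw [← hrank]
  have hle : span ℝ ((Λ ⊓ V.restrictScalars ℤ : Submodule ℤ E) : Set E) ≤ V :=
    span_le.2 fun x hx ↦ hx.2
  exact Submodule.finrank_mono hle

section HalfDifferenceBody

variable {E : Type*} [NormedAddCommGroup E] [NormedSpace ℝ E] {K : Set E}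

theorem balanced_half_sub_self (hK : Convex ℝ K) : Balanced ℝ ((2 : ℝ)⁻¹ • (K - K)) := by
  rw [balanced_iff_neg_mem ((hK.sub hK).smul _)]
  rintro _ ⟨_, ⟨a, ha, b, hb, rfl⟩, rfl⟩
  exact ⟨b - a, sub_mem_sub hb ha, by simp [smul_sub]⟩

theorem half_sub_self_mem_nhds_zero {x : E} (hx : x ∈ interior K) :
    (2 : ℝ)⁻¹ • (K - K) ∈ 𝓝 (0 : E) := by
  have hcont : ContinuousAt (fun v : E ↦ x + (2 : ℝ) • v) 0 := by fun_prop
  refine Filter.mem_of_superset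
    (hcont.preimage_mem_nhds (by simpa using mem_interior_iff_mem_nhds.1 hx)) fun v hv ↦ ?_
  refine ⟨x + (2 : ℝ) • v - x, sub_mem_sub hv (interior_subset hx), ?_⟩
  simp [smul_smul]

theorem mem_two_div_smul_half_sub_self {x y m : E} (hx : x ∈ K) (hy : y ∈ K) {n : ℕ}
    (hn : 0 < n) (hm : (n : ℤ) • m = x - y) : m ∈ (2 / n : ℝ) • (2 : ℝ)⁻¹ • (K - K) := by
  rw [smul_smul, mem_smul_set_iff_inv_smul_mem₀ (by positivity)]
  convert sub_mem_sub hx hy using 1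
  rw [← hm, ← Int.cast_smul_eq_zsmul ℝ]
  congr 1
  push_cast
  field_simp

end HalfDifferenceBody

def HasDiscreteMonotonicity {d : ℕ} (K : Set (Fin d → ℝ)) (Λ : Submodule ℤ (Fin d → ℝ)) :
    Prop :=
  ∀ M : Submodule ℤ (Fin d → ℝ), M ≤ Λ → ∀ r s : ℕ, 0 < r → r ≤ s →
    (resCount K Λ ((s : ℤ) • M) : ℝ) / (s : ℝ) ^ (finrank ℤ M) ≤
    (resCount K Λ ((r : ℤ) • M) : ℝ) / (r : ℝ) ^ (finrank ℤ M)

section Counting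

variable {d : ℕ} {K : Set (Fin d → ℝ)} {Λ : Submodule ℤ (Fin d → ℝ)}

theorem resCount_le_resCount (hfin : (K ∩ (Λ : Set (Fin d → ℝ))).Finite)
    {N N' : Submodule ℤ (Fin d → ℝ)}
    (h : ∀ x ∈ K ∩ (Λ : Set (Fin d → ℝ)), ∀ y ∈ K ∩ (Λ : Set (Fin d → ℝ)),
      x - y ∈ N' → x - y ∈ N) :
    resCount K Λ N ≤ resCount K Λ N' :=
  ncard_image_le_ncard_image_of_eq_imp_eq hfin fun x hx y hy hxy ↦
    QuotientAddGroup.eq_iff_sub_mem.2 (h x hx y hy (QuotientAddGroup.eq_iff_sub_mem.1 hxy))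

theorem resCount_bot : resCount K Λ ⊥ = latCount K Λ :=
  InjOn.ncard_image fun _ _ _ _ hxy ↦ sub_eq_zero.1 (QuotientAddGroup.eq_iff_sub_mem.1 hxy)

theorem resCount_self_le_one : resCount K Λ Λ ≤ 1 := by
  have hsub : QuotientAddGroup.mk (s := Λ.toAddSubgroup) '' (K ∩ (Λ : Set (Fin d → ℝ))) ⊆ {0} := by
    rintro _ ⟨x, hx, rfl⟩
    exact (QuotientAddGroup.eq_zero_iff x).2 hx.2
  exact (ncard_le_ncard hsub).trans (ncard_singleton _).le

theorem HasDiscreteMonotonicity.div_pow_le (hmono : HasDiscreteMonotonicity K Λ)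
    {M : Submodule ℤ (Fin d → ℝ)} (hM : M ≤ Λ) {i : ℕ} (hrank : finrank ℤ M ≤ i) {r s : ℕ}
    (hr : 0 < r) (hrs : r ≤ s) :
    (resCount K Λ ((s : ℤ) • M) : ℝ) / (s : ℝ) ^ i ≤
      (resCount K Λ ((r : ℤ) • M) : ℝ) / (r : ℝ) ^ i := by
  obtain ⟨k, rfl⟩ := Nat.exists_eq_add_of_le hrank
  have hrs' : (r : ℝ) ≤ s := by exact_mod_cast hrs
  rw [pow_add, pow_add, ← div_div, ← div_div]
  exact div_le_div₀ (by positivity) (hmono M hM r s hr hrs) (by positivity)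
    (pow_le_pow_left₀ (Nat.cast_nonneg r) hrs' k)

section Chain

variable {n : ℕ} {M : ℕ → Submodule ℤ (Fin d → ℝ)} {q : ℕ → ℕ}
  (hfin : (K ∩ (Λ : Set (Fin d → ℝ))).Finite) (hmono : HasDiscreteMonotonicity K Λ)
  (hMΛ : ∀ i, M i ≤ Λ) (hrank : ∀ i, finrank ℤ (M i) ≤ i) (hM0 : M 0 = ⊥)
  (hq : ∀ i, 0 < q i) (hq_anti : ∀ i j, i ≤ j → j < n → q j ≤ q i)
  (hnest : ∀ i < n, ∀ x ∈ K ∩ (Λ : Set (Fin d → ℝ)), ∀ y ∈ K ∩ (Λ : Set (Fin d → ℝ)),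
    ∀ m ∈ Λ, (q i : ℤ) • m = x - y → m ∈ M i)
include hfin hmono hMΛ hrank hM0 hq hq_anti hnest

theorem latCount_le_prod_mul_resCount {i : ℕ} (hi : i ≤ n) {r : ℕ} (hr : 0 < r)
    (hrq : ∀ j < i, r ≤ q j) :
    (latCount K Λ : ℝ) ≤
      (∏ j ∈ Finset.range i, (q j : ℝ)) * ((resCount K Λ ((r : ℤ) • M i) : ℝ) / (r : ℝ) ^ i) := by
  induction i generalizing r with
  | zero => simp [hM0, smul_bot', resCount_bot]
  | succ i ih =>
    have hstart := ih (by omega) (hq i) fun j hj ↦ hq_anti j i hj.le (by omega)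
    have hrefine : resCount K Λ ((q i : ℤ) • M i) ≤ resCount K Λ ((q i : ℤ) • M (i + 1)) := by
      refine resCount_le_resCount hfin fun x hx y hy hxy ↦ ?_
      obtain ⟨m, hm, hmxy⟩ := (mem_smul_pointwise_iff_exists _ _ _).1 hxy
      exact (mem_smul_pointwise_iff_exists _ _ _).2
        ⟨m, hnest i (by omega) x hx y hy m (hMΛ _ hm) hmxy, hmxy⟩
    have hrescale := hmono.div_pow_le (hMΛ (i + 1)) (hrank (i + 1)) hr (hrq i i.lt_succ_self)
    have hqi : (0 : ℝ) < q i := by exact_mod_cast hq i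
    calc (latCount K Λ : ℝ)
        ≤ (∏ j ∈ Finset.range i, (q j : ℝ)) *
            ((resCount K Λ ((q i : ℤ) • M i) : ℝ) / (q i : ℝ) ^ i) := hstart
      _ ≤ (∏ j ∈ Finset.range i, (q j : ℝ)) *
            ((resCount K Λ ((q i : ℤ) • M (i + 1)) : ℝ) / (q i : ℝ) ^ i) := by gcongr
      _ = (∏ j ∈ Finset.range (i + 1), (q j : ℝ)) *
            ((resCount K Λ ((q i : ℤ) • M (i + 1)) : ℝ) / (q i : ℝ) ^ (i + 1)) := by
          rw [Finset.prod_range_succ, pow_succ]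
          field_simp
      _ ≤ _ := by gcongr

theorem latCount_le_prod_of_chain (hMn : M n = Λ) :
    (latCount K Λ : ℝ) ≤ ∏ j ∈ Finset.range n, (q j : ℝ) := by
  have hbound := latCount_le_prod_mul_resCount hfin hmono hMΛ hrank hM0 hq hq_anti hnest le_rfl
    one_pos fun j _ ↦ hq j
  have hone : (resCount K Λ (((1 : ℕ) : ℤ) • M n) : ℝ) ≤ 1 := by
    simpa [hMn] using resCount_self_le_one (K := K) (Λ := Λ)
  simpa using hbound.trans (mul_le_of_le_one_right (by positivity) (by simpa using hone))

end Chain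

end Counting

section SuccessiveMinima

variable {d : ℕ} {C : Set (Fin d → ℝ)} {Λ : Submodule ℤ (Fin d → ℝ)}

theorem succMin_nonneg (i : ℕ) : 0 ≤ succMin i C Λ :=
  Real.sInf_nonneg fun _ ht ↦ ht.1.le

theorem finrank_span_lt_of_lt_succMin {i : ℕ} {t : ℝ} (ht : 0 < t) (hlt : t < succMin i C Λ) :
    finrank ℝ (span ℝ (t • C ∩ (Λ : Set (Fin d → ℝ)))) < i := by
  by_contra! h
  exact hlt.not_ge (csInf_le ⟨0, fun _ hs ↦ hs.1.le⟩ ⟨ht, h⟩)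

theorem succMin_mono {T : ℝ} (hT : 0 < T)
    (hspan : span ℝ (T • C ∩ (Λ : Set (Fin d → ℝ))) = ⊤) {i j : ℕ} (hij : i ≤ j) (hj : j ≤ d) :
    succMin i C Λ ≤ succMin j C Λ :=
  csInf_le_csInf ⟨0, fun _ hs ↦ hs.1.le⟩ ⟨T, hT, by rwa [hspan, finrank_top, finrank_fin_fun]⟩
    fun _ ht ↦ ⟨ht.1, hij.trans ht.2⟩

theorem succMin_pos [DiscreteTopology Λ] (hC : Bornology.IsBounded C) {T : ℝ} (hT : 0 < T)
    (hspan : span ℝ (T • C ∩ (Λ : Set (Fin d → ℝ))) = ⊤) {i : ℕ} (hi : 0 < i) (hid : i ≤ d) :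
    0 < succMin i C Λ := by
  obtain ⟨ε, hε, hεΛ⟩ := exists_pos_forall_norm_lt_eq_zero Λ
  obtain ⟨R, hR, hCR⟩ := hC.exists_pos_norm_le
  refine (div_pos hε hR).trans_le (le_csInf ⟨T, hT, by rwa [hspan, finrank_top, finrank_fin_fun]⟩ ?_)
  rintro t ⟨ht, hrank⟩
  by_contra! hsmall
  have hzero : ∀ v ∈ t • C ∩ (Λ : Set (Fin d → ℝ)), v = 0 := by
    rintro _ ⟨⟨c, hc, rfl⟩, hv⟩
    refine hεΛ _ hv ?_
    calc ‖t • c‖ = t * ‖c‖ := by rw [norm_smul, Real.norm_of_nonneg ht.le]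
      _ ≤ t * R := by gcongr; exact hCR c hc
      _ < ε := (lt_div_iff₀ hR).1 hsmall
  rw [span_eq_bot.2 hzero, finrank_bot] at hrank
  omega

theorem span_smul_inter_mono (hC : Balanced ℝ C) {t t' : ℝ} (ht : 0 ≤ t) (htt' : t ≤ t') :
    span ℝ (t • C ∩ (Λ : Set (Fin d → ℝ))) ≤ span ℝ (t' • C ∩ (Λ : Set (Fin d → ℝ))) :=
  span_mono <| inter_subset_inter_left _ <| hC.smul_mono <| by
    rwa [Real.norm_of_nonneg ht, Real.norm_of_nonneg (ht.trans htt')]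

theorem exists_forall_span_smul_inter_le (hC : Balanced ℝ C) {s : Set ℝ} (hs : s.Nonempty)
    (hpos : s ⊆ Ioi 0) (hmax : ∀ a ∈ s, ∀ b ∈ s, max a b ∈ s) :
    ∃ t₀ ∈ s, ∀ t ∈ s, span ℝ (t • C ∩ (Λ : Set (Fin d → ℝ))) ≤
      span ℝ (t₀ • C ∩ (Λ : Set (Fin d → ℝ))) :=
  DirectedOn.exists_forall_le_of_wellFoundedGT hs fun a ha b hb ↦ ⟨max a b, hmax a ha b hb,
    span_smul_inter_mono hC (le_of_lt (hpos ha)) (le_max_left a b),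
    span_smul_inter_mono hC (le_of_lt (hpos hb)) (le_max_right a b)⟩

theorem exists_span_smul_inter_eq_top [DiscreteTopology Λ] [IsZLattice ℝ Λ] (hC : Balanced ℝ C)
    (habs : Absorbent ℝ C) : ∃ T : ℝ, 0 < T ∧ span ℝ (T • C ∩ (Λ : Set (Fin d → ℝ))) = ⊤ := by
  obtain ⟨T, hT, hmax⟩ := exists_forall_span_smul_inter_le (Λ := Λ) hC nonempty_Ioi subset_rfl
    fun a ha _ _ ↦ mem_Ioi.2 (lt_max_of_lt_left ha)
  refine ⟨T, hT, eq_top_iff.2 ?_⟩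
  rw [← IsZLattice.span_top (K := ℝ) (L := Λ), span_le]
  intro v hv
  obtain ⟨t, ht, hvt⟩ := habs.gauge_set_nonempty (x := v)
  exact hmax t ht (subset_span ⟨hvt, hv⟩)

theorem exists_subspace_forall_lt_succMin (hC : Balanced ℝ C) (i : ℕ) :
    ∃ V : Submodule ℝ (Fin d → ℝ), finrank ℝ V ≤ i ∧ (d ≤ i → V = ⊤) ∧
      ∀ t, 0 < t → t < succMin (i + 1) C Λ → t • C ∩ (Λ : Set (Fin d → ℝ)) ⊆ V := by
  by_cases hid : d ≤ i
  · exact ⟨⊤, by simpa using hid, fun _ ↦ rfl, fun _ _ _ ↦ subset_univ _⟩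
  rcases le_or_gt (succMin (i + 1) C Λ) 0 with hnonpos | hpos
  · exact ⟨⊥, by simp, fun h ↦ absurd h hid, fun t ht hlt ↦ absurd (ht.trans hlt) hnonpos.not_gt⟩
  obtain ⟨t₀, ⟨ht₀, ht₀lt⟩, hmax⟩ := exists_forall_span_smul_inter_le (Λ := Λ) hC
    (s := Ioo 0 (succMin (i + 1) C Λ)) (nonempty_Ioo.2 hpos) (fun _ h ↦ h.1)
    fun a ha _ hb ↦ ⟨lt_max_of_lt_left ha.1, max_lt ha.2 hb.2⟩
  exact ⟨_, Nat.lt_succ_iff.1 (finrank_span_lt_of_lt_succMin ht₀ ht₀lt), fun h ↦ absurd h hid,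
    fun t ht hlt ↦ subset_span.trans (hmax t ⟨ht, hlt⟩)⟩

end SuccessiveMinima

theorem two_div_floor_two_div_add_one_lt {a : ℝ} (ha : 0 < a) : 2 / (⌊2 / a + 1⌋₊ : ℝ) < a := by
  have hfloor : 2 / a < ⌊2 / a + 1⌋₊ := by linarith [Nat.lt_floor_add_one (2 / a + 1)]
  rw [div_lt_iff₀ ((div_pos two_pos ha).trans hfloor)]
  rw [div_lt_iff₀ ha] at hfloor
  linarith

theorem floor_two_div_add_one_le_floor {a b : ℝ} (ha : 0 < a) (hab : a ≤ b) :
    ⌊2 / b + 1⌋₊ ≤ ⌊2 / a + 1⌋₊ :=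
  Nat.floor_le_floor (by gcongr)

theorem stmt17 {d : ℕ} (K : Set (Fin d → ℝ)) (Λ : Submodule ℤ (Fin d → ℝ))
    [DiscreteTopology Λ] [IsZLattice ℝ Λ]
    (hKconv : Convex ℝ K) (hKcomp : IsCompact K) (hKint : (interior K).Nonempty)
    (hmono : ∀ M : Submodule ℤ (Fin d → ℝ), M ≤ Λ → ∀ r s : ℕ, 0 < r → r ≤ s →
      (resCount K Λ ((s : ℤ) • M) : ℝ) / (s : ℝ) ^ (Module.finrank ℤ M) ≤
      (resCount K Λ ((r : ℤ) • M) : ℝ) / (r : ℝ) ^ (Module.finrank ℤ M)) :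
    (latCount K Λ : ℤ) ≤ ∏ i : Fin d, ⌊2 / lam (i.val + 1) K Λ + 1⌋ := by
  obtain ⟨x₀, hx₀⟩ := hKint
  have hbal := balanced_half_sub_self hKconv
  obtain ⟨T, hT, hspan⟩ := exists_span_smul_inter_eq_top (Λ := Λ) hbal
    (absorbent_nhds_zero (half_sub_self_mem_nhds_zero hx₀))
  have hlam_pos : ∀ j < d, 0 < lam (j + 1) K Λ := fun j hj ↦
    succMin_pos ((hKcomp.isBounded.sub hKcomp.isBounded).smul₀ _) hT hspan j.succ_pos hj
  have hfloor_arg : ∀ j, 1 ≤ 2 / lam (j + 1) K Λ + 1 := fun j ↦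
    le_add_of_nonneg_left (div_nonneg zero_le_two (succMin_nonneg _))
  have hq_pos : ∀ j, 0 < ⌊2 / lam (j + 1) K Λ + 1⌋₊ := fun j ↦ Nat.floor_pos.2 (hfloor_arg j)
  choose V hVrank hVtop hV using exists_subspace_forall_lt_succMin (Λ := Λ) hbal
  have hcount := latCount_le_prod_of_chain (n := d) (M := fun i ↦ Λ ⊓ (V i).restrictScalars ℤ)
    (q := fun j ↦ ⌊2 / lam (j + 1) K Λ + 1⌋₊) (hKcomp.isBounded.finite_inter_submodule Λ) hmono
    (fun _ ↦ inf_le_left) (fun i ↦ (finrank_inf_restrictScalars_le (V i)).trans (hVrank i))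
    (by simp [finrank_eq_zero.1 (Nat.le_zero.1 (hVrank 0))]) hq_pos
    (fun i j hij hj ↦ floor_two_div_add_one_le_floor (hlam_pos i (hij.trans_lt hj))
      (succMin_mono hT hspan (by omega) hj))
    (fun i hi x hx y hy m hm hmxy ↦ ⟨hm, hV i _ (div_pos two_pos (Nat.cast_pos.2 (hq_pos i)))
      (two_div_floor_two_div_add_one_lt (hlam_pos i hi))
      ⟨mem_two_div_smul_half_sub_self hx.1 hy.1 (hq_pos i) hmxy, hm⟩⟩)
    (by simp [hVtop d le_rfl])
  rw [Fin.prod_univ_eq_prod_range (fun j ↦ ⌊2 / lam (j + 1) K Λ + 1⌋) d]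
  simp only [← Int.natCast_floor_eq_floor (zero_le_one.trans (hfloor_arg _))]
  exact_mod_cast hcount
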